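/- arXiv:2407.14623 — 6 statements merged into one kernel-verified Lean document; each statement's English description precedes it below -/
import Mathlib

section
/- A rule R on inflow profiles ℝ^n_+ satisfies scale invariance, downstream impartiality, and upstream invariance if and only if there exists α = (α_1,...,α_{n-1}) ∈ [0,1]^{n-1} such that for all e and all i, R_i(e) = α_i e_i + Σ_{k<i} (1-α_k)e_k/(n-k), where α_n := 1. -/
open Finset

/-- Nonnegative inflow profile: the domain `ℝ^n_+`. -/
def Nonneg (n : ℕ) (e : Fin n → ℝ) : Prop := ∀ i, 0 ≤ e i

/-- A rule maps each inflow profile to a nonnegative, feasible, non-wasteful allocation. -/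
def IsRule (n : ℕ) (R : (Fin n → ℝ) → (Fin n → ℝ)) : Prop :=
  ∀ e : Fin n → ℝ, Nonneg n e →
    (∀ i, 0 ≤ R e i) ∧
    (∀ k : Fin n, ∑ i ∈ Finset.Iic k, R e i ≤ ∑ i ∈ Finset.Iic k, e i) ∧
    (∑ i, R e i = ∑ i, e i)

/-- Scale invariance. -/
def ScaleInvariant (n : ℕ) (R : (Fin n → ℝ) → (Fin n → ℝ)) : Prop :=
  ∀ e : Fin n → ℝ, Nonneg n e → ∀ γ : ℝ, 0 ≤ γ →
    ∀ i, R (fun j => γ * e j) i = γ * R e i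

/-- Upstream invariance. -/
def UpstreamInvariant (n : ℕ) (R : (Fin n → ℝ) → (Fin n → ℝ)) : Prop :=
  ∀ e e' : Fin n → ℝ, Nonneg n e → Nonneg n e' →
    ∀ i : Fin n, e i < e' i → (∀ j, j ≠ i → e j = e' j) →
      ∀ k, k < i → R e k = R e' k

/-- Downstream impartiality. -/
def DownstreamImpartial (n : ℕ) (R : (Fin n → ℝ) → (Fin n → ℝ)) : Prop :=
  ∀ e e' : Fin n → ℝ, Nonneg n e → Nonneg n e' →
    ∀ i : Fin n, e i < e' i → (∀ j, j ≠ i → e j = e' j) →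
      (∀ k l, i < k → i < l → e k = e l) →
      ∀ k l, i < k → i < l → R e' k - R e k = R e' l - R e l

/-- Order preservation. -/
def OrderPreserving (n : ℕ) (R : (Fin n → ℝ) → (Fin n → ℝ)) : Prop :=
  ∀ e : Fin n → ℝ, Nonneg n e → ∀ i j : Fin n, i < j → e j ≤ e i → R e j ≤ R e i

/-- Balance: when a single agent `i` (not the last one) has the only positive inflow,
`i` receives the average of the amounts received by the strictly downstream agents. -/
def IsBalanced (n : ℕ) (R : (Fin n → ℝ) → (Fin n → ℝ)) : Prop :=
  ∀ e : Fin n → ℝ, Nonneg n e → ∀ i : Fin n, (i : ℕ) < n - 1 → 0 < e i →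
    (∀ j, j ≠ i → e j = 0) →
    R e i = (1 / ((n : ℝ) - 1 - (i : ℕ))) * ∑ k ∈ Finset.Ioi i, R e k

/-- Progressivity. -/
def Progressive (n : ℕ) (R : (Fin n → ℝ) → (Fin n → ℝ)) : Prop :=
  ∀ e : Fin n → ℝ, Nonneg n e → ∀ i : Fin n, (i : ℕ) < n - 1 → 0 < e i →
    (∀ j, j ≠ i → e j = 0) →
    R e i ≤ (1 / ((n : ℝ) - 1 - (i : ℕ))) * ∑ k ∈ Finset.Ioi i, R e k

/-- Regressivity. -/
def Regressive (n : ℕ) (R : (Fin n → ℝ) → (Fin n → ℝ)) : Prop :=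
  ∀ e : Fin n → ℝ, Nonneg n e → ∀ i : Fin n, (i : ℕ) < n - 1 → 0 < e i →
    (∀ j, j ≠ i → e j = 0) →
    R e i ≥ (1 / ((n : ℝ) - 1 - (i : ℕ))) * ∑ k ∈ Finset.Ioi i, R e k

/-- Equal treatment of equal source inflows: here `s` (resp. `s'`) is the source of `e`
(resp. `e'`), i.e. the smallest index among the first `n-1` agents with positive inflow. -/
def EqualTreatmentOfEqualSourceInflows (n : ℕ) (R : (Fin n → ℝ) → (Fin n → ℝ)) : Prop :=
  ∀ e e' : Fin n → ℝ, Nonneg n e → Nonneg n e' →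
    ∀ s s' : Fin n, (s : ℕ) < n - 1 → (s' : ℕ) < n - 1 →
      0 < e s → 0 < e' s' →
      (∀ j, j < s → e j = 0) → (∀ j, j < s' → e' j = 0) →
      e s = e' s' → R e s = R e' s'

/-- Equal treatment of equal upstream total inflow. -/
def EqualTreatmentOfEqualUpstreamTotalInflow (n : ℕ) (R : (Fin n → ℝ) → (Fin n → ℝ)) : Prop :=
  ∀ e e' : Fin n → ℝ, Nonneg n e → Nonneg n e' →
    ∀ i : Fin n, e i = e' i →
      (∑ j ∈ Finset.Iio i, e j) = (∑ j ∈ Finset.Iio i, e' j) →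
      R e i = R e' i

/-- The Shapley rule: `R^Sh_i(e) = Σ_{j ≤ i} e_j / (n - j + 1)` (with 1-based indices). -/
noncomputable def Sh (n : ℕ) (e : Fin n → ℝ) (i : Fin n) : ℝ :=
  ∑ j ∈ Finset.Iic i, e j / ((n : ℝ) - (j : ℕ))

/-- The no-transfer rule. -/
def NT (n : ℕ) (e : Fin n → ℝ) (i : Fin n) : ℝ := e i

/-- The egalitarian full-transfer rule: `R^EFT_i(e) = Σ_{j < i} e_j / (n - j)` for `i < n`,
and the last agent additionally keeps her own inflow. -/
noncomputable def EFT (n : ℕ) (e : Fin n → ℝ) (i : Fin n) : ℝ :=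
  (∑ j ∈ Finset.Iio i, e j / ((n : ℝ) - 1 - (j : ℕ))) +
    (if (i : ℕ) = n - 1 then e i else 0)

/-- The egalitarian partial-transfer rule:
`R^EPT_i(e) = [1 - (n - i)/(n - 1)] e_i + (1/(n-1)) Σ_{k < i} e_k` (1-based indices). -/
noncomputable def EPT (n : ℕ) (e : Fin n → ℝ) (i : Fin n) : ℝ :=
  (1 - ((n : ℝ) - 1 - (i : ℕ)) / ((n : ℝ) - 1)) * e i +
    (1 / ((n : ℝ) - 1)) * ∑ j ∈ Finset.Iio i, e j

/-- The rule `R^α`: agent `k` keeps a fraction `α k` of her inflow and transfers the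
rest equally among the agents strictly downstream. -/
noncomputable def Ralpha (n : ℕ) (α : Fin n → ℝ) (e : Fin n → ℝ) (i : Fin n) : ℝ :=
  α i * e i + ∑ k ∈ Finset.Iio i, (1 - α k) * e k / ((n : ℝ) - 1 - (k : ℕ))

/-- Admissible parameter vectors: `α ∈ [0,1]^{n-1}` extended by `α_n = 1`. -/
def AlphaOK (n : ℕ) (α : Fin n → ℝ) : Prop :=
  (∀ i, 0 ≤ α i ∧ α i ≤ 1) ∧ (∀ i : Fin n, (i : ℕ) = n - 1 → α i = 1)

/-!
Both `R` and `R^α`, with `α i := R_i(δ_i)`, are non-wasteful, upstream invariant and downstream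
impartial, and by scale invariance they agree at agent `i` on every profile `c • δ_i`. Such maps
coincide, agent by agent. Suppose `R_k = R^α_k` for all `k < i`. If `e` is constant after `j < i`
and `e'` differs from `e` only at `j`, then `(R - R^α)(e') - (R - R^α)(e)` vanishes up to `j`, is
constant after `j` and sums to zero, so it vanishes. Altering the coordinates below `i` one at a
time thus shows that `(R - R^α)_i` takes the same value on all profiles equal to `c` from `i` on.
By upstream invariance `R_i(e)` only depends on `e_0, …, e_i`, and both `e` and `e_i • δ_i` agree
up to `i` with such a profile for `c = e_i`.
-/

open Function

theorem eq_zero_of_sum_eq_zero_of_eq_above {ι M : Type*} [Fintype ι] [LinearOrder ι]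
    [AddCommMonoid M] [IsAddTorsionFree M] {D : ι → M} {j : ι}
    (hle : ∀ k ≤ j, D k = 0) (hgt : ∀ k l, j < k → j < l → D k = D l) (hsum : ∑ k, D k = 0)
    (k : ι) : D k = 0 := by
  rcases le_or_gt k j with hkj | hjk
  · exact hle k hkj
  have hcount : #{l | j < l} • D k = 0 := by
    rw [← hsum, ← sum_const, sum_filter]
    refine sum_congr rfl fun l _ => ?_
    split_ifs with hl
    · exact hgt k l hjk hl
    · exact (hle l (not_lt.1 hl)).symm
  exact (nsmul_eq_zero_iff.1 hcount).resolve_right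
    (card_ne_zero_of_mem (mem_filter.2 ⟨mem_univ k, hjk⟩))

def NonWasteful (n : ℕ) (R : (Fin n → ℝ) → (Fin n → ℝ)) : Prop :=
  ∀ e, Nonneg n e → ∑ k, R e k = ∑ k, e k

variable {n : ℕ} {R S : (Fin n → ℝ) → (Fin n → ℝ)}

theorem Nonneg.update {e : Fin n → ℝ} (he : Nonneg n e) (i : Fin n) {x : ℝ} (hx : 0 ≤ x) :
    Nonneg n (update e i x) := by
  intro j
  rcases eq_or_ne j i with rfl | hji
  · simpa using hx
  · simpa [hji] using he j

theorem nonneg_single (i : Fin n) {c : ℝ} (hc : 0 ≤ c) : Nonneg n (Pi.single i c) := by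
  intro j
  rcases eq_or_ne j i with rfl | hji
  · simpa using hc
  · simp [hji]

theorem IsRule.apply_eq_zero_of_eqOn_Iic (hR : IsRule n R) {e : Fin n → ℝ} (he : Nonneg n e)
    {k : Fin n} (h : ∀ j ≤ k, e j = 0) : R e k = 0 := by
  obtain ⟨hpos, hfeas, -⟩ := hR e he
  have hprefix : ∑ j ∈ Iic k, R e j ≤ 0 :=
    (hfeas k).trans_eq (sum_eq_zero fun j hj => h j (mem_Iic.1 hj))
  exact le_antisymm ((single_le_sum (fun j _ => hpos j) (mem_Iic.2 le_rfl)).trans hprefix)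
    (hpos k)

theorem IsRule.nonWasteful (hR : IsRule n R) : NonWasteful n R := fun e he => (hR e he).2.2

theorem IsRule.alphaOK (hR : IsRule n R) : AlphaOK n fun i => R (Pi.single i 1) i := by
  refine ⟨fun i => ⟨(hR _ (nonneg_single i zero_le_one)).1 i, ?_⟩, fun i hi => ?_⟩
  · obtain ⟨hpos, hfeas, -⟩ := hR _ (nonneg_single i zero_le_one)
    calc R (Pi.single i 1) i ≤ ∑ j ∈ Iic i, R (Pi.single i 1) j :=
          single_le_sum (fun j _ => hpos j) (mem_Iic.2 le_rfl)
      _ ≤ ∑ j ∈ Iic i, Pi.single i (1 : ℝ) j := hfeas i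
      _ = 1 := by simp [sum_pi_single']
  · have hupstream : ∀ j ≠ i, R (Pi.single i 1) j = 0 := fun j hji =>
      hR.apply_eq_zero_of_eqOn_Iic (nonneg_single i zero_le_one) fun l hl =>
        Pi.single_eq_of_ne (hl.trans_lt (lt_of_le_of_ne (Fin.le_def.2 (by omega)) hji)).ne 1
    have htotal := (hR _ (nonneg_single i zero_le_one)).2.2
    rwa [sum_eq_single i (fun j _ hji => hupstream j hji) (by simp),
      sum_pi_single', if_pos (mem_univ i)] at htotal

theorem UpstreamInvariant.apply_update (hR : UpstreamInvariant n R) {e : Fin n → ℝ}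
    (he : Nonneg n e) {i k : Fin n} (hki : k < i) {x : ℝ} (hx : 0 ≤ x) :
    R (update e i x) k = R e k := by
  have hoff : ∀ j ≠ i, e j = update e i x j := fun j hji => (update_of_ne hji x e).symm
  rcases lt_trichotomy (e i) x with hlt | rfl | hgt
  · exact (hR e _ he (he.update i hx) i (by simpa using hlt) hoff k hki).symm
  · rw [update_eq_self]
  · exact hR _ e (he.update i hx) he i (by simpa using hgt)
      (fun j hji => (hoff j hji).symm) k hki

theorem UpstreamInvariant.apply_eq_of_eqOn_Iic (hR : UpstreamInvariant n R) {e e' : Fin n → ℝ}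
    (he : Nonneg n e) (he' : Nonneg n e') {k : Fin n} (h : ∀ j ≤ k, e j = e' j) :
    R e k = R e' k := by
  suffices ∀ s : Finset (Fin n), ∀ e, Nonneg n e → (∀ j ∉ s, e j = e' j) → (∀ j ∈ s, k < j) →
      R e k = R e' k from
    this (Ioi k) e he (fun j hj => h j (not_lt.1 (by simpa using hj))) fun j hj => mem_Ioi.1 hj
  intro s
  induction s using Finset.induction_on with
  | empty =>
    intro e _ hoff _
    rw [funext fun j => hoff j (notMem_empty j)]
  | insert a s has ih =>
    intro e he hoff hs
    rw [← hR.apply_update he (hs a (mem_insert_self a s)) (he' a)]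
    refine ih _ (he.update a (he' a)) (fun j hj => ?_) fun j hj => hs j (mem_insert_of_mem hj)
    rcases eq_or_ne j a with rfl | hja
    · exact update_self j _ e
    · rw [update_of_ne hja]
      exact hoff j (by simp [hja, hj])

theorem DownstreamImpartial.sub_eq_sub (hR : DownstreamImpartial n R) {e : Fin n → ℝ}
    (he : Nonneg n e) {i : Fin n} {x : ℝ} (hx : 0 ≤ x)
    (htail : ∀ k l, i < k → i < l → e k = e l) {k l : Fin n} (hk : i < k) (hl : i < l) :
    R (update e i x) k - R e k = R (update e i x) l - R e l := by
  have hoff : ∀ j ≠ i, e j = update e i x j := fun j hji => (update_of_ne hji x e).symm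
  rcases lt_trichotomy (e i) x with hlt | rfl | hgt
  · exact hR e _ he (he.update i hx) i (by simpa using hlt) hoff htail k l hk hl
  · simp
  · have htail' : ∀ k l, i < k → i < l → update e i x k = update e i x l := fun k l hk hl => by
      rw [← hoff k hk.ne', ← hoff l hl.ne', htail k l hk hl]
    have := hR _ e (he.update i hx) he i (by simpa using hgt)
      (fun j hji => (hoff j hji).symm) htail' k l hk hl
    linarith

theorem Ralpha_eq_of_eqOn_Iic (α : Fin n → ℝ) {e e' : Fin n → ℝ} {k : Fin n}
    (h : ∀ j ≤ k, e j = e' j) : Ralpha n α e k = Ralpha n α e' k := by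
  unfold Ralpha
  rw [h k le_rfl, sum_congr rfl fun j hj => by rw [h j (mem_Iio.1 hj).le]]

theorem Ralpha_sub_Ralpha_of_lt (α : Fin n → ℝ) {e e' : Fin n → ℝ} {i : Fin n}
    (h : ∀ j ≠ i, e j = e' j) {k : Fin n} (hik : i < k) :
    Ralpha n α e k - Ralpha n α e' k = (1 - α i) * (e i - e' i) / ((n : ℝ) - 1 - (i : ℕ)) := by
  unfold Ralpha
  rw [h k hik.ne', add_sub_add_left_eq_sub, ← sum_sub_distrib,
    sum_eq_single_of_mem i (mem_Iio.2 hik) fun j _ hji => by rw [h j hji, sub_self]]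
  ring

theorem Ralpha_single_self (α : Fin n → ℝ) (i : Fin n) (c : ℝ) :
    Ralpha n α (Pi.single i c) i = α i * c := by
  unfold Ralpha
  rw [Pi.single_eq_same, sum_eq_zero fun j hj => by rw [Pi.single_eq_of_ne (mem_Iio.1 hj).ne]; simp,
    add_zero]

theorem nonWasteful_Ralpha {α : Fin n → ℝ} (hα : AlphaOK n α) : NonWasteful n (Ralpha n α) := by
  intro e _
  have hswap : ∑ i, ∑ k ∈ Iio i, (1 - α k) * e k / ((n : ℝ) - 1 - (k : ℕ)) =
      ∑ k, ∑ _i ∈ Ioi k, (1 - α k) * e k / ((n : ℝ) - 1 - (k : ℕ)) :=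
    sum_comm' fun i k => by simp
  unfold Ralpha
  rw [sum_add_distrib, hswap, ← sum_add_distrib]
  refine sum_congr rfl fun k _ => ?_
  rw [sum_const, Fin.card_Ioi, nsmul_eq_mul]
  by_cases hlast : (k : ℕ) = n - 1
  · simp [hα.2 k hlast]
  have hk : (k : ℕ) + 1 < n := by omega
  have hcast : ((n - 1 - k : ℕ) : ℝ) = (n : ℝ) - 1 - (k : ℕ) := by
    rw [Nat.cast_sub (by omega), Nat.cast_sub (by omega), Nat.cast_one]
  have hne : (n : ℝ) - 1 - (k : ℕ) ≠ 0 := by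
    rw [← hcast]
    exact_mod_cast (by omega : n - 1 - k ≠ 0)
  rw [hcast]
  field_simp
  ring

theorem scaleInvariant_Ralpha (α : Fin n → ℝ) : ScaleInvariant n (Ralpha n α) := by
  intro e _ γ _ i
  simp only [Ralpha, mul_add, mul_sum]
  congr 1
  · ring
  · exact sum_congr rfl fun k _ => by ring

theorem upstreamInvariant_Ralpha (α : Fin n → ℝ) : UpstreamInvariant n (Ralpha n α) :=
  fun _ _ _ _ _ _ hoff _ hk =>
    Ralpha_eq_of_eqOn_Iic α fun j hj => hoff j (hj.trans_lt hk).ne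

theorem downstreamImpartial_Ralpha (α : Fin n → ℝ) : DownstreamImpartial n (Ralpha n α) := by
  intro e e' _ _ i _ hoff _ k l hk hl
  rw [Ralpha_sub_Ralpha_of_lt α (fun j hj => (hoff j hj).symm) hk,
    Ralpha_sub_Ralpha_of_lt α (fun j hj => (hoff j hj).symm) hl]

theorem ScaleInvariant.congr (hS : ScaleInvariant n S) (h : ∀ e, Nonneg n e → R e = S e) :
    ScaleInvariant n R := by
  intro e he γ hγ i
  rw [h e he, h _ fun j => mul_nonneg hγ (he j)]
  exact hS e he γ hγ i

theorem UpstreamInvariant.congr (hS : UpstreamInvariant n S) (h : ∀ e, Nonneg n e → R e = S e) :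
    UpstreamInvariant n R := by
  intro e e' he he'
  rw [h e he, h e' he']
  exact hS e e' he he'

theorem DownstreamImpartial.congr (hS : DownstreamImpartial n S)
    (h : ∀ e, Nonneg n e → R e = S e) : DownstreamImpartial n R := by
  intro e e' he he'
  rw [h e he, h e' he']
  exact hS e e' he he'

theorem ScaleInvariant.apply_single_self (hR : ScaleInvariant n R) (i : Fin n) {c : ℝ}
    (hc : 0 ≤ c) : R (Pi.single i c) i = c * R (Pi.single i 1) i := by
  have hscaled := hR _ (nonneg_single i zero_le_one) c hc i
  convert hscaled using 2
  ext j
  simp [Pi.single_apply]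

theorem sub_apply_update_eq_sub_apply
    (hRc : NonWasteful n R) (hSc : NonWasteful n S)
    (hRd : DownstreamImpartial n R) (hSd : DownstreamImpartial n S)
    {i : Fin n} (hbelow : ∀ k < i, ∀ e, Nonneg n e → R e k = S e k)
    {e : Fin n → ℝ} (he : Nonneg n e) {j : Fin n} (hji : j < i) {x : ℝ} (hx : 0 ≤ x)
    (htail : ∀ k l, j < k → j < l → e k = e l) :
    R (update e j x) i - S (update e j x) i = R e i - S e i := by
  have he' := he.update j hx
  refine sub_eq_zero.1 (eq_zero_of_sum_eq_zero_of_eq_above (j := j)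
    (D := fun k => (R (update e j x) k - S (update e j x) k) - (R e k - S e k)) ?_ ?_ ?_ i)
  · intro k hk
    simp only [hbelow k (hk.trans_lt hji) _ he', hbelow k (hk.trans_lt hji) e he, sub_self]
  · intro k l hk hl
    linarith [hRd.sub_eq_sub he hx htail hk hl, hSd.sub_eq_sub he hx htail hk hl]
  · simp only [sum_sub_distrib, hRc _ he', hSc _ he', hRc e he, hSc e he, sub_self]

theorem sub_apply_eq_sub_apply_const
    (hRc : NonWasteful n R) (hSc : NonWasteful n S)
    (hRd : DownstreamImpartial n R) (hSd : DownstreamImpartial n S) {i : Fin n}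
    (hbelow : ∀ k < i, ∀ e, Nonneg n e → R e k = S e k) {c : ℝ} (hc : 0 ≤ c) {e : Fin n → ℝ}
    (he : Nonneg n e) (hconst : ∀ k, i ≤ k → e k = c) :
    R e i - S e i = R (fun _ => c) i - S (fun _ => c) i := by
  suffices ∀ m ≤ (i : ℕ), ∀ e, Nonneg n e → (∀ k : Fin n, m ≤ (k : ℕ) → e k = c) →
      R e i - S e i = R (fun _ => c) i - S (fun _ => c) i from
    this i le_rfl e he fun k hk => hconst k (Fin.le_def.2 hk)
  intro m
  induction m with
  | zero =>
    intro _ e _ hconst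
    rw [funext fun k => hconst k (Nat.zero_le _)]
  | succ m ih =>
    intro hm e he hconst
    set j : Fin n := ⟨m, by omega⟩
    rw [← sub_apply_update_eq_sub_apply hRc hSc hRd hSd hbelow he (j := j) (Fin.lt_def.2 hm) hc
      fun k l hk hl => (hconst k hk).trans (hconst l hl).symm]
    refine ih (by omega) _ (he.update j hc) fun k hk => ?_
    rcases eq_or_ne k j with rfl | hkj
    · exact update_self _ _ _
    · rw [update_of_ne hkj]
      exact hconst k (by have := Fin.val_ne_of_ne hkj; simp only [j] at this; omega)

theorem eq_of_apply_single_self_eq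
    (hRc : NonWasteful n R) (hSc : NonWasteful n S)
    (hRd : DownstreamImpartial n R) (hSd : DownstreamImpartial n S)
    (hRu : UpstreamInvariant n R) (hSu : UpstreamInvariant n S)
    (hsingle : ∀ i (c : ℝ), 0 ≤ c → R (Pi.single i c) i = S (Pi.single i c) i)
    {e : Fin n → ℝ} (he : Nonneg n e) : R e = S e := by
  suffices ∀ i e, Nonneg n e → R e i = S e i from funext fun i => this i e he
  intro i
  induction i using WellFoundedLT.induction with
  | _ i hbelow =>
  intro e he
  have hlocal : ∀ e e', Nonneg n e → Nonneg n e' → (∀ j ≤ i, e j = e' j) →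
      R e i - S e i = R e' i - S e' i := fun e e' he he' h => by
    rw [hRu.apply_eq_of_eqOn_Iic he he' h, hSu.apply_eq_of_eqOn_Iic he he' h]
  have hcut : ∀ g : Fin n → ℝ, Nonneg n g →
      R (fun k => if k < i then g k else e i) i - S (fun k => if k < i then g k else e i) i =
        R (fun _ => e i) i - S (fun _ => e i) i := fun g hg =>
    sub_apply_eq_sub_apply_const hRc hSc hRd hSd hbelow (he i)
      (fun k => by split_ifs; exacts [hg k, he i])
      fun k hk => if_neg (not_lt.2 hk)
  suffices R e i - S e i = 0 from sub_eq_zero.1 this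
  calc R e i - S e i
      = R (fun k => if k < i then e k else e i) i - S (fun k => if k < i then e k else e i) i :=
        hlocal _ _ he (fun k => by split_ifs; exacts [he k, he i])
          fun j hj => by
            split_ifs with hji
            · rfl
            · rw [le_antisymm hj (not_lt.1 hji)]
    _ = R (fun k => if k < i then (0 : Fin n → ℝ) k else e i) i -
          S (fun k => if k < i then (0 : Fin n → ℝ) k else e i) i := by
        rw [hcut e he, hcut 0 fun _ => le_rfl]
    _ = R (Pi.single i (e i)) i - S (Pi.single i (e i)) i :=
        hlocal _ _ (fun k => by split_ifs; exacts [le_rfl, he i])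
          (nonneg_single i (he i)) fun j hj => by
            split_ifs with hji
            · rw [Pi.single_eq_of_ne hji.ne]; rfl
            · rw [le_antisymm hj (not_lt.1 hji), Pi.single_eq_same]
    _ = 0 := by rw [hsingle i (e i) (he i), sub_self]

theorem ralpha_characterization_general (n : ℕ)
    (R : (Fin n → ℝ) → (Fin n → ℝ)) (hR : IsRule n R) :
    (ScaleInvariant n R ∧ DownstreamImpartial n R ∧ UpstreamInvariant n R) ↔
    (∃ α : Fin n → ℝ, AlphaOK n α ∧
      ∀ e : Fin n → ℝ, Nonneg n e → ∀ i, R e i = Ralpha n α e i) := by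
  constructor
  · rintro ⟨hSI, hDI, hUI⟩
    refine ⟨_, hR.alphaOK, fun e he => congrFun <| eq_of_apply_single_self_eq
      hR.nonWasteful (nonWasteful_Ralpha hR.alphaOK) hDI
      (downstreamImpartial_Ralpha _) hUI (upstreamInvariant_Ralpha _) (fun i c hc => ?_) he⟩
    rw [hSI.apply_single_self i hc, Ralpha_single_self, mul_comm]
  · rintro ⟨α, -, hRα⟩
    have h : ∀ e, Nonneg n e → R e = Ralpha n α e := fun e he => funext (hRα e he)
    exact ⟨(scaleInvariant_Ralpha α).congr h, (downstreamImpartial_Ralpha α).congr h,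
      (upstreamInvariant_Ralpha α).congr h⟩

/-- Theorem 4 in the paper: a rule satisfies scale invariance, downstream
impartiality and upstream invariance iff it is an `R^α` rule for some `α ∈ [0,1]^{n-1}`. -/
theorem ralpha_characterization (n : ℕ) (hn : 0 < n)
    (R : (Fin n → ℝ) → (Fin n → ℝ)) (hR : IsRule n R) :
    (ScaleInvariant n R ∧ DownstreamImpartial n R ∧ UpstreamInvariant n R) ↔
    (∃ α : Fin n → ℝ, AlphaOK n α ∧
      ∀ e : Fin n → ℝ, Nonneg n e → ∀ i, R e i = Ralpha n α e i) :=
  ralpha_characterization_general n R hR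
end

section
/- For each α ∈ [0,1]^{n-1} (with α_n := 1), the rule R^α defined by R^α_i(e) = α_i e_i + Σ_{k<i} (1-α_k)e_k/(n-k) satisfies balance if and only if α_k = 1/(n-k+1) for every k ∈ {1,...,n-1}. -/
/-! If agent `i` has the only inflow, `R^α` gives `α i * e i` to `i` and
`(1 - α i) * e i / (n - 1 - i)` to each of the `n - 1 - i` downstream agents, so balance at `i`
reads `α i * (n - 1 - i) = 1 - α i`, i.e. `α i = 1 / (n - i)`. -/

open Finset

namespace Ralpha

variable {n : ℕ} {α e : Fin n → ℝ} {i : Fin n}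

theorem apply_self_of_single_source (h0 : ∀ j, j ≠ i → e j = 0) :
    Ralpha n α e i = α i * e i := by
  have hupstream : ∑ k ∈ Iio i, (1 - α k) * e k / ((n : ℝ) - 1 - (k : ℕ)) = 0 :=
    sum_eq_zero fun k hk => by simp [h0 k (mem_Iio.mp hk).ne]
  rw [Ralpha, hupstream, add_zero]

theorem apply_of_single_source_of_lt (h0 : ∀ j, j ≠ i → e j = 0) {k : Fin n} (hik : i < k) :
    Ralpha n α e k = (1 - α i) * e i / ((n : ℝ) - 1 - (i : ℕ)) := by
  rw [Ralpha, h0 k hik.ne', mul_zero, zero_add, sum_eq_single_of_mem i (mem_Iio.mpr hik)]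
  intro j _ hji
  simp [h0 j hji]

theorem sum_Ioi_of_single_source (hi : (i : ℕ) < n - 1) (h0 : ∀ j, j ≠ i → e j = 0) :
    ∑ k ∈ Ioi i, Ralpha n α e k = (1 - α i) * e i := by
  have hcard : ((#(Ioi i) : ℕ) : ℝ) = (n : ℝ) - 1 - (i : ℕ) := by
    rw [Fin.card_Ioi, Nat.sub_sub, Nat.cast_sub (by omega)]
    push_cast
    ring
  have hd : (n : ℝ) - 1 - (i : ℕ) ≠ 0 := by
    rw [← hcard]
    exact_mod_cast (Fin.card_Ioi i).trans_ne (by omega)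
  rw [sum_congr rfl fun k hk => apply_of_single_source_of_lt h0 (mem_Ioi.mp hk), sum_const,
    nsmul_eq_mul, hcard, mul_div_cancel₀ _ hd]

theorem balanced_at_single_source_iff (hi : (i : ℕ) < n - 1) (hpos : 0 < e i)
    (h0 : ∀ j, j ≠ i → e j = 0) :
    Ralpha n α e i = 1 / ((n : ℝ) - 1 - (i : ℕ)) * ∑ k ∈ Ioi i, Ralpha n α e k ↔
      α i = 1 / ((n : ℝ) - (i : ℕ)) := by
  have hd : (0 : ℝ) < (n : ℝ) - 1 - (i : ℕ) := by
    have : ((i : ℕ) : ℝ) + 1 < n := by exact_mod_cast (by omega : (i : ℕ) + 1 < n)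
    linarith
  rw [apply_self_of_single_source h0, sum_Ioi_of_single_source hi h0, one_div_mul_eq_div,
    mul_div_right_comm, mul_left_inj' hpos.ne', eq_div_iff hd.ne',
    eq_div_iff (by linarith : (n : ℝ) - (i : ℕ) ≠ 0)]
  constructor <;> intro h <;> linarith

end Ralpha

theorem ralpha_balanced_iff_general (n : ℕ) (α : Fin n → ℝ) :
    IsBalanced n (fun e => Ralpha n α e) ↔
    (∀ k : Fin n, (k : ℕ) < n - 1 → α k = 1 / ((n : ℝ) - (k : ℕ))) := by
  constructor
  · intro hbal k hk
    have hsingle : ∀ j, j ≠ k → Pi.single (M := fun _ => ℝ) k 1 j = 0 :=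
      fun j hj => Pi.single_eq_of_ne hj 1
    have hnonneg : Nonneg n (Pi.single k 1) := fun j => by
      by_cases hj : j = k <;> simp [hj]
    exact (Ralpha.balanced_at_single_source_iff hk (by simp) hsingle).mp
      (hbal _ hnonneg k hk (by simp) hsingle)
  · intro hα e _ i hi hpos h0
    exact (Ralpha.balanced_at_single_source_iff hi hpos h0).mpr (hα i hi)

/-- `R^α` satisfies balance iff `α_k = 1/(n-k+1)` for every `k ≤ n-1`. -/
theorem ralpha_balanced_iff (n : ℕ) (hn : 0 < n) (α : Fin n → ℝ) (hα : AlphaOK n α) :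
    IsBalanced n (fun e => Ralpha n α e) ↔
    (∀ k : Fin n, (k : ℕ) < n - 1 → α k = 1 / ((n : ℝ) - (k : ℕ))) :=
  ralpha_balanced_iff_general n α
end

section
/- For each α ∈ [0,1]^{n-1} (with α_n := 1), the rule R^α satisfies progressivity (R_i(e) ≤ (1/(n-i)) Σ_{k>i} R_k(e) whenever e has a unique positive coordinate i < n) if and only if α_k ≤ 1/(n-k+1) for every k ∈ {1,...,n-1}. -/
open Finset

/-! For a profile with a single positive inflow `e i`, agent `i` keeps `α i * e i` and the
`n - 1 - i` downstream agents share the rest equally, so progressivity at `i` reads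
`α i ≤ (1 - α i) / (n - 1 - i)`, i.e. `α i ≤ 1 / (n - i)`. -/

lemma le_one_sub_div_iff {a m : ℝ} (hm : 0 < m) : a ≤ (1 - a) / m ↔ a ≤ 1 / (m + 1) := by
  rw [le_div_iff₀ hm, le_div_iff₀ (by linarith)]
  constructor <;> intro h <;> linarith

section SingleSource

variable {n : ℕ} (α : Fin n → ℝ) {e : Fin n → ℝ} {i : Fin n}

lemma ralpha_apply_self_of_single (h0 : ∀ j, j ≠ i → e j = 0) :
    Ralpha n α e i = α i * e i := by
  rw [Ralpha, Finset.sum_eq_zero, add_zero]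
  intro k hk
  rw [h0 k (Finset.mem_Iio.mp hk).ne, mul_zero, zero_div]

lemma ralpha_apply_of_lt_of_single (h0 : ∀ j, j ≠ i → e j = 0) {k : Fin n} (hik : i < k) :
    Ralpha n α e k = (1 - α i) * e i / ((n : ℝ) - 1 - (i : ℕ)) := by
  rw [Ralpha, h0 k hik.ne', mul_zero, zero_add, Finset.sum_eq_single_of_mem i (Finset.mem_Iio.mpr hik)]
  intro j _ hji
  rw [h0 j hji, mul_zero, zero_div]

lemma sub_one_sub_pos_of_lt_sub_one (hi : (i : ℕ) < n - 1) : (0 : ℝ) < (n : ℝ) - 1 - (i : ℕ) := by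
  have : ((i : ℕ) : ℝ) + 1 < n := by exact_mod_cast (by omega : (i : ℕ) + 1 < n)
  linarith

lemma sum_Ioi_ralpha_of_single (hi : (i : ℕ) < n - 1) (h0 : ∀ j, j ≠ i → e j = 0) :
    ∑ k ∈ Finset.Ioi i, Ralpha n α e k = (1 - α i) * e i := by
  rw [Finset.sum_congr rfl fun k hk => ralpha_apply_of_lt_of_single α h0 (Finset.mem_Ioi.mp hk),
    Finset.sum_const, nsmul_eq_mul, Fin.card_Ioi]
  have hcard : ((n - 1 - (i : ℕ) : ℕ) : ℝ) = (n : ℝ) - 1 - (i : ℕ) := by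
    rw [Nat.cast_sub (by omega), Nat.cast_sub (by omega), Nat.cast_one]
  rw [hcard, mul_div_cancel₀ _ (sub_one_sub_pos_of_lt_sub_one hi).ne']

lemma ralpha_progressive_at_single_iff (hi : (i : ℕ) < n - 1) (hei : 0 < e i)
    (h0 : ∀ j, j ≠ i → e j = 0) :
    Ralpha n α e i ≤ (1 / ((n : ℝ) - 1 - (i : ℕ))) * ∑ k ∈ Finset.Ioi i, Ralpha n α e k ↔
      α i ≤ 1 / ((n : ℝ) - (i : ℕ)) := by
  have hm := sub_one_sub_pos_of_lt_sub_one hi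
  have hsucc : (n : ℝ) - 1 - (i : ℕ) + 1 = (n : ℝ) - (i : ℕ) := by ring
  rw [ralpha_apply_self_of_single α h0, sum_Ioi_ralpha_of_single α hi h0,
    ← mul_assoc, one_div_mul_eq_div, div_mul_eq_mul_div, mul_div_right_comm,
    mul_le_mul_iff_of_pos_right hei, le_one_sub_div_iff hm, hsucc]

end SingleSource

theorem ralpha_progressive_iff_general (n : ℕ) (α : Fin n → ℝ) :
    Progressive n (fun e => Ralpha n α e) ↔
    (∀ k : Fin n, (k : ℕ) < n - 1 → α k ≤ 1 / ((n : ℝ) - (k : ℕ))) := by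
  constructor
  · intro hP k hk
    have hsingle : ∀ j, j ≠ k → Pi.single (M := fun _ => ℝ) k 1 j = 0 :=
      fun j hj => Pi.single_eq_of_ne hj 1
    refine (ralpha_progressive_at_single_iff α hk (by simp) hsingle).mp ?_
    exact hP _ (fun j => by by_cases h : j = k <;> simp [h]) k hk (by simp) hsingle
  · intro hα e _ i hi hei h0
    exact (ralpha_progressive_at_single_iff α hi hei h0).mpr (hα i hi)

/-- `R^α` satisfies progressivity iff `α_k ≤ 1/(n-k+1)` for every `k ≤ n-1`. -/
theorem ralpha_progressive_iff (n : ℕ) (hn : 0 < n) (α : Fin n → ℝ) (hα : AlphaOK n α) :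
    Progressive n (fun e => Ralpha n α e) ↔
    (∀ k : Fin n, (k : ℕ) < n - 1 → α k ≤ 1 / ((n : ℝ) - (k : ℕ))) :=
  ralpha_progressive_iff_general n α
end

section
/- For each α ∈ [0,1]^{n-1} (with α_n := 1), the rule R^α satisfies regressivity (R_i(e) ≥ (1/(n-i)) Σ_{k>i} R_k(e) whenever e has a unique positive coordinate i < n) if and only if α_k ≥ 1/(n-k+1) for every k ∈ {1,...,n-1}. -/
open Finset

/-!
When `e` is concentrated at `i`, agent `i` keeps `α i * e i` and each of the `n - 1 - i`
downstream agents receives the same share `(1 - α i) * e i / (n - 1 - i)`, so their average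
is that share and regressivity at `e` reads `1 - α i ≤ (n - 1 - i) * α i`, i.e.
`1 / (n - i) ≤ α i`.
-/

lemma Fin.cast_card_Ioi {R : Type*} [Ring R] {n : ℕ} (i : Fin n) :
    ((Ioi i).card : R) = n - 1 - i := by
  rw [Fin.card_Ioi, Nat.sub_sub, Nat.cast_sub (by omega : 1 + (i : ℕ) ≤ n)]
  push_cast
  abel

lemma Fin.cast_sub_one_sub_pos {R : Type*} [Ring R] [LinearOrder R] [IsStrictOrderedRing R]
    {n : ℕ} (i : Fin n) (hi : (i : ℕ) < n - 1) : (0 : R) < n - 1 - i := by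
  rw [sub_sub, sub_pos]
  exact_mod_cast (by omega : 1 + (i : ℕ) < n)

lemma one_div_mul_one_sub_mul_le_mul_iff {K : Type*} [Field K] [LinearOrder K]
    [IsStrictOrderedRing K] {a c x : K} (hc : 0 < c) (hx : 0 < x) :
    1 / c * ((1 - a) * x) ≤ a * x ↔ 1 / (c + 1) ≤ a := by
  rw [one_div_mul_eq_div, div_le_iff₀ hc, mul_right_comm, mul_le_mul_iff_left₀ hx,
    div_le_iff₀ (by linarith)]
  constructor <;> intro h <;> linarith

section Concentrated

variable {n : ℕ} (α : Fin n → ℝ) {e : Fin n → ℝ} {i : Fin n}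

lemma Ralpha_self_of_eq_zero (he : ∀ j, j ≠ i → e j = 0) : Ralpha n α e i = α i * e i := by
  rw [Ralpha, Finset.sum_eq_zero, add_zero]
  intro j hj
  simp [he j (mem_Iio.mp hj).ne]

lemma Ralpha_of_lt_of_eq_zero (he : ∀ j, j ≠ i → e j = 0) {k : Fin n} (hik : i < k) :
    Ralpha n α e k = (1 - α i) * e i / ((n : ℝ) - 1 - i) := by
  rw [Ralpha, he k hik.ne', mul_zero, zero_add,
    Finset.sum_eq_single_of_mem i (mem_Iio.mpr hik)]
  intro j _ hj
  simp [he j hj]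

lemma sum_Ioi_Ralpha_of_eq_zero (he : ∀ j, j ≠ i → e j = 0) (hi : (i : ℕ) < n - 1) :
    ∑ k ∈ Ioi i, Ralpha n α e k = (1 - α i) * e i := by
  rw [Finset.sum_congr rfl fun k hk => Ralpha_of_lt_of_eq_zero α he (mem_Ioi.mp hk),
    sum_const, nsmul_eq_mul, Fin.cast_card_Ioi]
  field_simp [(Fin.cast_sub_one_sub_pos i hi).ne']

lemma Ralpha_regressive_at_iff (hi : (i : ℕ) < n - 1) (hei : 0 < e i)
    (he : ∀ j, j ≠ i → e j = 0) :
    Ralpha n α e i ≥ (1 / ((n : ℝ) - 1 - i)) * ∑ k ∈ Ioi i, Ralpha n α e k ↔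
      1 / ((n : ℝ) - i) ≤ α i := by
  rw [ge_iff_le, Ralpha_self_of_eq_zero α he, sum_Ioi_Ralpha_of_eq_zero α he hi,
    one_div_mul_one_sub_mul_le_mul_iff (Fin.cast_sub_one_sub_pos i hi) hei, sub_right_comm,
    sub_add_cancel]

end Concentrated

theorem ralpha_regressive_iff_general (n : ℕ) (α : Fin n → ℝ) :
    Regressive n (fun e => Ralpha n α e) ↔
    (∀ k : Fin n, (k : ℕ) < n - 1 → 1 / ((n : ℝ) - (k : ℕ)) ≤ α k) := by
  constructor
  · intro hreg k hk
    set e : Fin n → ℝ := Pi.single k 1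
    have he : ∀ j, j ≠ k → e j = 0 := fun j hj => Pi.single_eq_of_ne hj 1
    have hek : 0 < e k := by simp [e]
    have hnonneg : Nonneg n e := Pi.single_nonneg (α := fun _ => ℝ) |>.mpr zero_le_one
    exact (Ralpha_regressive_at_iff α hk hek he).mp (hreg e hnonneg k hk hek he)
  · intro h e _ i hi hei he
    exact (Ralpha_regressive_at_iff α hi hei he).mpr (h i hi)

/-- `R^α` satisfies regressivity iff `α_k ≥ 1/(n-k+1)` for every `k ≤ n-1`. -/
theorem ralpha_regressive_iff (n : ℕ) (hn : 0 < n) (α : Fin n → ℝ) (hα : AlphaOK n α) :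
    Regressive n (fun e => Ralpha n α e) ↔
    (∀ k : Fin n, (k : ℕ) < n - 1 → 1 / ((n : ℝ) - (k : ℕ)) ≤ α k) :=
  ralpha_regressive_iff_general n α
end

section
/- The compromise rule R^λ = λ R^NT + (1-λ) R^EFT satisfies progressivity if and only if λ ≤ 1/n, and satisfies regressivity if and only if λ ≥ 1/2 (for n ≥ 2). -/
open Finset

/-!
If the only positive inflow `a` is at agent `i`, with `d = n - 1 - i ≥ 1` agents downstream,
then `R^λ` gives `λ a` to `i` and `(1 - λ) a / d` to each downstream agent. So progressivity
(regressivity) at `i` reads `λ (d + 1) ≤ 1` (`≥ 1`), and as `d` ranges over `1, …, n - 1` the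
binding cases are `d = n - 1` and `d = 1`.
-/

section SingleSource

variable {n : ℕ}

lemma eq_pi_single_of_forall_ne {e : Fin n → ℝ} {i : Fin n} (hz : ∀ j, j ≠ i → e j = 0) :
    e = Pi.single i (e i) := by
  ext j
  by_cases hj : j = i
  · subst hj; simp
  · simp [hj, hz j hj]

lemma forall_single_source_iff (P : (Fin n → ℝ) → Fin n → Prop) :
    (∀ e, Nonneg n e → ∀ i : Fin n, (i : ℕ) < n - 1 → 0 < e i → (∀ j, j ≠ i → e j = 0) →
      P e i) ↔
    ∀ i : Fin n, (i : ℕ) < n - 1 → ∀ a : ℝ, 0 < a → P (Pi.single i a) i := by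
  constructor
  · intro h i hi a ha
    refine h _ (fun j => ?_) i hi (by simpa using ha) fun j hj => by simp [hj]
    by_cases hj : j = i
    · subst hj; simpa using ha.le
    · simp [hj]
  · intro h e _ i hi hei hz
    rw [eq_pi_single_of_forall_ne hz]
    exact h i hi _ hei

lemma downstream_count_pos {i : Fin n} (hi : (i : ℕ) < n - 1) : 0 < (n : ℝ) - 1 - i := by
  have : (i : ℝ) + 1 < n := by exact_mod_cast (by omega : (i : ℕ) + 1 < n)
  linarith

end SingleSource

section Compromise

variable {n : ℕ} {i : Fin n} {a : ℝ}

lemma EFT_single_self (hi : (i : ℕ) < n - 1) : EFT n (Pi.single i a) i = 0 := by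
  rw [EFT, if_neg hi.ne, Finset.sum_eq_zero fun j hj => ?_, add_zero]
  rw [Pi.single_eq_of_ne (Finset.mem_Iio.mp hj).ne, zero_div]

lemma EFT_single_of_lt {k : Fin n} (hik : i < k) :
    EFT n (Pi.single i a) k = a / ((n : ℝ) - 1 - i) := by
  rw [EFT, Pi.single_eq_of_ne hik.ne', ite_self, add_zero,
    Finset.sum_eq_single_of_mem i (Finset.mem_Iio.mpr hik), Pi.single_eq_same]
  intro j _ hj
  rw [Pi.single_eq_of_ne hj, zero_div]

noncomputable def compromise (n : ℕ) (l : ℝ) : (Fin n → ℝ) → (Fin n → ℝ) :=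
  fun e i => l * NT n e i + (1 - l) * EFT n e i

variable {l : ℝ}

lemma compromise_single_self (hi : (i : ℕ) < n - 1) :
    compromise n l (Pi.single i a) i = l * a := by
  simp [compromise, NT, EFT_single_self hi]

lemma sum_Ioi_compromise_single (hi : (i : ℕ) < n - 1) :
    ∑ k ∈ Finset.Ioi i, compromise n l (Pi.single i a) k = (1 - l) * a := by
  have hterm : ∀ k ∈ Finset.Ioi i,
      compromise n l (Pi.single i a) k = (1 - l) * (a / ((n : ℝ) - 1 - i)) := by
    intro k hk
    have hik := Finset.mem_Ioi.mp hk
    simp [compromise, NT, Pi.single_eq_of_ne hik.ne', EFT_single_of_lt hik]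
  have hcard : ((n - 1 - (i : ℕ) : ℕ) : ℝ) = (n : ℝ) - 1 - i := by
    rw [Nat.cast_sub (by omega), Nat.cast_sub (by omega), Nat.cast_one]
  rw [Finset.sum_congr rfl hterm, Finset.sum_const, Fin.card_Ioi, nsmul_eq_mul, hcard]
  field_simp [(downstream_count_pos hi).ne']

lemma mul_le_average_iff {d : ℝ} (hd : 0 < d) {a : ℝ} (ha : 0 < a) :
    l * a ≤ 1 / d * ((1 - l) * a) ↔ l * (d + 1) ≤ 1 := by
  rw [one_div, inv_mul_eq_div, le_div_iff₀ hd]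
  constructor <;> intro h <;> nlinarith

lemma average_le_mul_iff {d : ℝ} (hd : 0 < d) {a : ℝ} (ha : 0 < a) :
    1 / d * ((1 - l) * a) ≤ l * a ↔ 1 ≤ l * (d + 1) := by
  rw [one_div, inv_mul_eq_div, div_le_iff₀ hd]
  constructor <;> intro h <;> nlinarith

theorem progressive_compromise_iff :
    Progressive n (compromise n l) ↔ ∀ i : Fin n, (i : ℕ) < n - 1 → l * ((n : ℝ) - i) ≤ 1 := by
  rw [Progressive, forall_single_source_iff (fun e i => compromise n l e i ≤ _)]
  refine forall₂_congr fun i hi => ?_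
  have hd := downstream_count_pos hi
  have hsucc : (n : ℝ) - 1 - i + 1 = n - i := by ring
  simp (contextual := true) only [compromise_single_self hi, sum_Ioi_compromise_single hi,
    mul_le_average_iff hd, hsucc]
  exact ⟨fun h => h 1 one_pos, fun h _ _ => h⟩

theorem regressive_compromise_iff :
    Regressive n (compromise n l) ↔ ∀ i : Fin n, (i : ℕ) < n - 1 → 1 ≤ l * ((n : ℝ) - i) := by
  rw [Regressive, forall_single_source_iff (fun e i => compromise n l e i ≥ _)]
  refine forall₂_congr fun i hi => ?_
  have hd := downstream_count_pos hi
  have hsucc : (n : ℝ) - 1 - i + 1 = n - i := by ring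
  simp (contextual := true) only [ge_iff_le, compromise_single_self hi,
    sum_Ioi_compromise_single hi, average_le_mul_iff hd, hsucc]
  exact ⟨fun h => h 1 one_pos, fun h _ _ => h⟩

lemma forall_mul_sub_le_one_iff (hn : 2 ≤ n) (hl : 0 ≤ l) :
    (∀ i : Fin n, (i : ℕ) < n - 1 → l * ((n : ℝ) - i) ≤ 1) ↔ l ≤ 1 / n := by
  rw [le_div_iff₀ (by positivity)]
  constructor
  · intro h
    simpa using h ⟨0, by omega⟩ (by simp; omega)
  · intro h i _
    nlinarith [(Nat.cast_nonneg i : (0 : ℝ) ≤ i)]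

lemma forall_one_le_mul_sub_iff (hn : 2 ≤ n) :
    (∀ i : Fin n, (i : ℕ) < n - 1 → 1 ≤ l * ((n : ℝ) - i)) ↔ 1 / 2 ≤ l := by
  constructor
  · intro h
    have hlast := h ⟨n - 2, by omega⟩ (by simp; omega)
    rw [Nat.cast_sub hn] at hlast
    norm_num at hlast
    linarith
  · intro h i hi
    have : (i : ℝ) + 2 ≤ n := by exact_mod_cast (by omega : (i : ℕ) + 2 ≤ n)
    nlinarith

end Compromise

theorem compromise_progressive_regressive_iff_general (n : ℕ) (hn : 2 ≤ n)
    (l : ℝ) (hl0 : 0 ≤ l) :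
    (Progressive n (fun e i => l * NT n e i + (1 - l) * EFT n e i) ↔ l ≤ 1 / (n : ℝ)) ∧
    (Regressive n (fun e i => l * NT n e i + (1 - l) * EFT n e i) ↔ 1 / 2 ≤ l) :=
  ⟨progressive_compromise_iff.trans (forall_mul_sub_le_one_iff hn hl0),
    regressive_compromise_iff.trans (forall_one_le_mul_sub_iff hn)⟩

/-- the compromise rule `R^λ` is progressive iff `λ ≤ 1/n`, and
regressive iff `λ ≥ 1/2`. -/
theorem compromise_progressive_regressive_iff (n : ℕ) (hn : 2 ≤ n)
    (l : ℝ) (hl0 : 0 ≤ l) (hl1 : l ≤ 1) :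
    (Progressive n (fun e i => l * NT n e i + (1 - l) * EFT n e i) ↔ l ≤ 1 / (n : ℝ)) ∧
    (Regressive n (fun e i => l * NT n e i + (1 - l) * EFT n e i) ↔ 1 / 2 ≤ l) :=
  compromise_progressive_regressive_iff_general n hn l hl0
end

section
/- The partial compromise rule R^δ = δ R^NT + (1-δ) R^EPT coincides with R^α for the parameter vector α with α_1 = δ and α_i = 1 − (n−i)(1−δ)/(n−1) for i ∈ {2,...,n-1}; that is, for all e ∈ ℝ^n_+ and all i, δ e_i + (1-δ) R^EPT_i(e) = α_i e_i + Σ_{k<i} (1-α_k)e_k/(n-k). -/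
open Finset

/-! `R^α` is affine in `α`, the no-transfer rule is `R^1` and the egalitarian partial-transfer
rule is `R^α` for `α_k = 1 - (n-k)/(n-1)` (1-based; every agent passes on the share `1/(n-1)` of
her inflow to each downstream agent). Hence `δ R^NT + (1-δ) R^EPT = R^{δ·1 + (1-δ)α}`, and this
combination of parameter vectors is the one in the statement, `α_1 = 0` giving the entry `δ`. -/

theorem mul_Ralpha_add_one_sub_mul_Ralpha (n : ℕ) (δ : ℝ) (β γ e : Fin n → ℝ) (i : Fin n) :
    δ * Ralpha n β e i + (1 - δ) * Ralpha n γ e i =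
      Ralpha n (fun k => δ * β k + (1 - δ) * γ k) e i := by
  simp only [Ralpha, mul_add, mul_sum]
  rw [add_add_add_comm, ← sum_add_distrib]
  congr 1
  · ring
  · refine sum_congr rfl fun k _ => ?_
    ring

theorem NT_eq_Ralpha_one (n : ℕ) (e : Fin n → ℝ) (i : Fin n) : NT n e i = Ralpha n 1 e i := by
  simp [NT, Ralpha]

noncomputable def eptAlpha (n : ℕ) (k : Fin n) : ℝ := 1 - ((n : ℝ) - 1 - (k : ℕ)) / ((n : ℝ) - 1)

theorem EPT_eq_Ralpha_eptAlpha (n : ℕ) (e : Fin n → ℝ) (i : Fin n) :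
    EPT n e i = Ralpha n (eptAlpha n) e i := by
  have htransfer : ∀ k ∈ Iio i,
      (1 - eptAlpha n k) * e k / ((n : ℝ) - 1 - (k : ℕ)) = 1 / ((n : ℝ) - 1) * e k := by
    intro k hk
    have hkn : (k : ℕ) + 2 ≤ n := by
      have := Fin.lt_def.mp (mem_Iio.mp hk)
      omega
    have hnk : (n : ℝ) - 1 - (k : ℕ) ≠ 0 := by
      have : ((k : ℕ) : ℝ) + 2 ≤ n := by exact_mod_cast hkn
      linarith
    rw [eptAlpha, sub_sub_cancel, div_mul_eq_mul_div, div_right_comm,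
      mul_div_cancel_left₀ _ hnk, one_div_mul_eq_div]
  rw [Ralpha, sum_congr rfl htransfer, ← mul_sum, EPT, eptAlpha]

theorem partial_compromise_as_ralpha_general (n : ℕ) (hn : 2 ≤ n)
    (δ : ℝ) (e : Fin n → ℝ) (i : Fin n) :
    δ * NT n e i + (1 - δ) * EPT n e i =
      Ralpha n
        (fun k => if (k : ℕ) = 0 then δ else 1 - ((n : ℝ) - 1 - (k : ℕ)) * (1 - δ) / ((n : ℝ) - 1))
        e i := by
  have hn1 : (n : ℝ) - 1 ≠ 0 := sub_ne_zero.mpr (Nat.cast_ne_one.mpr (by omega))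
  rw [NT_eq_Ralpha_one, EPT_eq_Ralpha_eptAlpha, mul_Ralpha_add_one_sub_mul_Ralpha]
  congr 1
  funext k
  split_ifs with hk
  · simp [eptAlpha, hk, hn1]
  · simp only [eptAlpha, Pi.one_apply]
    field_simp
    ring

/-- the partial compromise rule `R^δ` coincides with `R^α` for
`α_1 = δ` and `α_i = 1 - (n-i)(1-δ)/(n-1)` for `i ∈ {2,...,n-1}`. -/
theorem partial_compromise_as_ralpha (n : ℕ) (hn : 2 ≤ n)
    (δ : ℝ) (hδ0 : 0 ≤ δ) (hδ1 : δ ≤ 1) (e : Fin n → ℝ) (he : Nonneg n e) (i : Fin n) :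
    δ * NT n e i + (1 - δ) * EPT n e i =
      Ralpha n
        (fun k => if (k : ℕ) = 0 then δ else 1 - ((n : ℝ) - 1 - (k : ℕ)) * (1 - δ) / ((n : ℝ) - 1))
        e i :=
  partial_compromise_as_ralpha_general n hn δ e i
end
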